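/- For any finite simple graph G of order n, q(G; 1) ≤ 2^{n−1} (with n ≥ 1), with equality if and only if G is the complete graph K_n. -/

import Mathlib

/-- The pair `x, y` lies in different classes among (neighbors of `a` only,
neighbors of `b` only, neighbors of both), with both distinct from `a` and `b`. -/
def togglePair {V : Type} (G : SimpleGraph V) (a b x y : V) : Prop :=
  (x ≠ a ∧ x ≠ b ∧ y ≠ a ∧ y ≠ b) ∧
  (G.Adj a x ∨ G.Adj b x) ∧ (G.Adj a y ∨ G.Adj b y) ∧
  ¬((G.Adj a x ↔ G.Adj a y) ∧ (G.Adj b x ↔ G.Adj b y))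

lemma togglePair_comm {V : Type} (G : SimpleGraph V) (a b x y : V) :
    togglePair G a b x y ↔ togglePair G a b y x := by
  unfold togglePair; tauto

/-- The pivot `G^{ab}`: toggle the adjacency of every pair of vertices (distinct
from `a`, `b`) lying in different classes among (neighbors of `a` only,
neighbors of `b` only, neighbors of both); all other adjacencies unchanged. -/
def pivot {V : Type} (G : SimpleGraph V) (a b : V) : SimpleGraph V where
  Adj x y := (togglePair G a b x y ∧ x ≠ y ∧ ¬ G.Adj x y) ∨
    (¬ togglePair G a b x y ∧ G.Adj x y)
  symm := by
    constructor
    intro x y h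
    rcases h with ⟨ht, hxy, hna⟩ | ⟨ht, ha⟩
    · exact Or.inl ⟨(togglePair_comm G a b x y).mp ht, hxy.symm,
        fun h => hna h.symm⟩
    · exact Or.inr ⟨fun h => ht ((togglePair_comm G a b y x).mp h), ha.symm⟩
  loopless := by
    constructor
    intro x h
    rcases h with ⟨_, hxy, _⟩ | ⟨_, ha⟩
    · exact hxy rfl
    · exact G.irrefl ha

/-- Deletion of the vertex `a` from `G`. -/
def delVert {V : Type} (G : SimpleGraph V) (a : V) : SimpleGraph {v : V // v ≠ a} :=
  G.comap (fun v => v.1)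

/-- `q` is an interlace polynomial map: invariant under graph isomorphism,
satisfying the pivot-deletion recursion `q(G) = q(G-a) + q(G^{ab}-b)` for every
edge `ab`, and equal to `x^n` on the edgeless graph on `n` vertices. -/
def IsInterlacePoly
    (q : ∀ (V : Type) [Fintype V] [DecidableEq V], SimpleGraph V → Polynomial ℤ) : Prop :=
  (∀ (V W : Type) [Fintype V] [DecidableEq V] [Fintype W] [DecidableEq W]
      (G : SimpleGraph V) (H : SimpleGraph W), Nonempty (G ≃g H) → q V G = q W H) ∧
  (∀ (V : Type) [Fintype V] [DecidableEq V] (G : SimpleGraph V) (a b : V), G.Adj a b →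
      q V G = q {v : V // v ≠ a} (delVert G a) +
        q {v : V // v ≠ b} (delVert (pivot G a b) b)) ∧
  (∀ (V : Type) [Fintype V] [DecidableEq V],
      q V (⊥ : SimpleGraph V) = Polynomial.X ^ (Fintype.card V))

section Aux

variable {V : Type}

lemma card_subtype_ne' [Fintype V] [DecidableEq V] (a : V) :
    Fintype.card {v : V // v ≠ a} = Fintype.card V - 1 := by
  simp [Fintype.card_subtype_compl]

lemma pivot_adj (G : SimpleGraph V) (a b x y : V) :
    (pivot G a b).Adj x y ↔ ((togglePair G a b x y ∧ x ≠ y ∧ ¬ G.Adj x y) ∨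
      (¬ togglePair G a b x y ∧ G.Adj x y)) := Iff.rfl

lemma delVert_adj (G : SimpleGraph V) (a : V) (x y : {v : V // v ≠ a}) :
    (delVert G a).Adj x y ↔ G.Adj x.1 y.1 := Iff.rfl

lemma not_togglePair_left (G : SimpleGraph V) (a b y : V) :
    ¬ togglePair G a b a y := fun h => h.1.1 rfl

lemma pivot_adj_left (G : SimpleGraph V) (a b y : V) :
    (pivot G a b).Adj a y ↔ G.Adj a y := by
  rw [pivot_adj]
  have h := not_togglePair_left G a b y
  tauto

lemma delVert_eq_top_iff (G : SimpleGraph V) (a : V) :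
    delVert G a = ⊤ ↔ ∀ x y : V, x ≠ a → y ≠ a → x ≠ y → G.Adj x y := by
  constructor
  · intro h x y hx hy hxy
    have : (delVert G a).Adj ⟨x, hx⟩ ⟨y, hy⟩ := by
      rw [h]
      exact fun he => hxy (congrArg Subtype.val he)
    exact this
  · intro h
    ext ⟨x, hx⟩ ⟨y, hy⟩
    simp only [delVert_adj, SimpleGraph.top_adj, ne_eq, Subtype.mk.injEq]
    exact ⟨fun ha => G.ne_of_adj ha, fun hxy => h x y hx hy hxy⟩

lemma not_togglePair_top (a b x y : V) :
    ¬ togglePair (⊤ : SimpleGraph V) a b x y := by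
  rintro ⟨⟨hxa, hxb, hya, hyb⟩, -, -, h⟩
  exact h ⟨⟨fun _ => Ne.symm hya, fun _ => Ne.symm hxa⟩,
    ⟨fun _ => Ne.symm hyb, fun _ => Ne.symm hxb⟩⟩

lemma pivot_top (a b : V) : pivot (⊤ : SimpleGraph V) a b = ⊤ := by
  ext x y
  rw [pivot_adj]
  have h := not_togglePair_top (V := V) a b x y
  tauto

lemma delVert_top [DecidableEq V] (a : V) :
    delVert (⊤ : SimpleGraph V) a = ⊤ := by
  rw [delVert_eq_top_iff]
  exact fun x y _ _ hxy => hxy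

end Aux

theorem interlacePoly_eval_one_le_two_pow
    (q : ∀ (V : Type) [Fintype V] [DecidableEq V], SimpleGraph V → Polynomial ℤ)
    (hq : IsInterlacePoly q)
    {V : Type} [Fintype V] [DecidableEq V] (G : SimpleGraph V)
    (hV : 1 ≤ Fintype.card V) :
    (q V G).eval 1 ≤ 2 ^ (Fintype.card V - 1) ∧
      ((q V G).eval 1 = 2 ^ (Fintype.card V - 1) ↔ G = ⊤) := by
  suffices H : ∀ n : ℕ, ∀ (V : Type) [Fintype V] [DecidableEq V] (G : SimpleGraph V),
      Fintype.card V = n → 1 ≤ n →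
      ((q V G).eval 1 ≤ 2 ^ (n - 1) ∧ ((q V G).eval 1 = 2 ^ (n - 1) ↔ G = ⊤)) by
    have := H (Fintype.card V) V G rfl hV
    exact this
  intro n
  induction n using Nat.strong_induction_on with
  | _ n IH =>
    intro V _ _ G hcard hn
    by_cases hE : ∃ a b, G.Adj a b
    · obtain ⟨a, b, hab⟩ := hE
      have hne : a ≠ b := G.ne_of_adj hab
      have h2 : 2 ≤ n := by
        rw [← hcard]
        have : Nontrivial V := ⟨a, b, hne⟩
        exact Fintype.one_lt_card
      have hca : Fintype.card {v : V // v ≠ a} = n - 1 := by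
        rw [card_subtype_ne', hcard]
      have hcb : Fintype.card {v : V // v ≠ b} = n - 1 := by
        rw [card_subtype_ne', hcard]
      obtain ⟨h1le, h1eq⟩ := IH (n - 1) (by omega) _ (delVert G a) hca (by omega)
      obtain ⟨h2le, h2eq⟩ := IH (n - 1) (by omega) _ (delVert (pivot G a b) b) hcb (by omega)
      have heval : (q V G).eval 1 =
          (q _ (delVert G a)).eval 1 + (q _ (delVert (pivot G a b) b)).eval 1 := by
        rw [hq.2.1 V G a b hab, Polynomial.eval_add]
      have hpow : (2 : ℤ) ^ (n - 1) = 2 ^ (n - 1 - 1) + 2 ^ (n - 1 - 1) := by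
        have h' : (2:ℤ) ^ (n - 1 - 1) + 2 ^ (n - 1 - 1) = 2 ^ (n - 1 - 1) * 2 := by ring
        rw [h', ← pow_succ]
        congr 1
        omega
      refine ⟨by rw [heval, hpow]; exact add_le_add h1le h2le, ?_, ?_⟩
      · intro heq
        have e1 : (q _ (delVert G a)).eval 1 = 2 ^ (n - 1 - 1) := by
          rw [heval, hpow] at heq; linarith
        have e2 : (q _ (delVert (pivot G a b) b)).eval 1 = 2 ^ (n - 1 - 1) := by
          rw [heval, hpow] at heq; linarith
        have hda := (delVert_eq_top_iff G a).mp (h1eq.mp e1)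
        have hdb := (delVert_eq_top_iff (pivot G a b) b).mp (h2eq.mp e2)
        have key : ∀ x y : V, x ≠ y → G.Adj x y := by
          have haanything : ∀ y : V, y ≠ a → G.Adj a y := by
            intro y hy
            by_cases hyb : y = b
            · subst hyb; exact hab
            · have := hdb a y hne.symm.symm hyb hy.symm
              · exact (pivot_adj_left G a b y).mp (hdb a y hne hyb hy.symm)
          intro x y hxy
          by_cases hx : x = a
          · subst hx; exact haanything y (Ne.symm hxy)
          · by_cases hy : y = a
            · subst hy; exact (haanything x hx).symm
            · exact hda x y hx hy hxy
        ext x y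
        simp only [SimpleGraph.top_adj]
        exact ⟨fun h => G.ne_of_adj h, key x y⟩
      · intro hG
        subst hG
        have e1 : (q _ (delVert (⊤ : SimpleGraph V) a)).eval 1 = 2 ^ (n - 1 - 1) :=
          h1eq.mpr (delVert_top a)
        have e2 : (q _ (delVert (pivot (⊤ : SimpleGraph V) a b) b)).eval 1 = 2 ^ (n - 1 - 1) := by
          apply h2eq.mpr
          rw [pivot_top]
          exact delVert_top b
        rw [heval, e1, e2, hpow]
    · push_neg at hE
      have hbot : G = ⊥ := by
        ext x y
        simp only [SimpleGraph.bot_adj, iff_false]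
        exact hE x y
      subst hbot
      have hx : (q V (⊥ : SimpleGraph V)).eval 1 = 1 := by
        rw [hq.2.2 V]
        simp
      rw [hx]
      have h1 : (1 : ℤ) ≤ 2 ^ (n - 1) := one_le_pow₀ (by norm_num)
      refine ⟨h1, ?_, ?_⟩
      · intro heq
        have hn1 : n = 1 := by
          by_contra hne
          have h2n : 2 ≤ n := by omega
          have : (2 : ℤ) ^ 1 ≤ 2 ^ (n - 1) :=
            pow_le_pow_right₀ (by norm_num) (by omega)
          simp at this
          omega
        have hsub : Subsingleton V := by
          rw [← Fintype.card_le_one_iff_subsingleton, hcard, hn1]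
        ext x y
        simp only [SimpleGraph.bot_adj, SimpleGraph.top_adj, false_iff, ne_eq, not_not]
        exact Subsingleton.elim x y
      · intro htop
        have hc1 : Fintype.card V ≤ 1 := by
          by_contra hc
          push_neg at hc
          obtain ⟨x, y, hxy⟩ := Fintype.exists_pair_of_one_lt_card hc
          have : (⊥ : SimpleGraph V).Adj x y := by rw [htop]; exact hxy
          exact this
        have : n = 1 := by omega
        rw [this]
        norm_num
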